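/- Hardy's inequality: there exists a constant c > 0 such that for every function f in the Sobolev space W^{1,2}(ℝ³), the integral over ℝ³ of |t|^{-2}|f(t)|² dt is at most c times the integral over ℝ³ of |∇f(t)|² dt. -/

import Mathlib

/-!
In polar coordinates `x = r • ω` on a space of dimension `n = k + 3`, both sides split into
integrals over rays, and it suffices to prove the one-dimensional weighted inequality
`∫₀^∞ r^k ‖g‖² ≤ (2/(k+1))² ∫₀^∞ r^(k+2) ‖g'‖²` for `g r = f (r • ω)`, whose derivative has
norm at most `‖Df‖`. On `[0, R]` it comes from integrating
`(r^(k+1) ‖g‖²)' = (k+1) r^k ‖g‖² + 2 r^(k+1) ⟪g, g'⟫` and absorbing the cross term by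
Cauchy–Schwarz and weighted AM–GM. The boundary term `R^(k+1) ‖g R‖²` becomes arbitrarily small
along some `R → ∞` because `∫ r^(k+2) ‖g‖² < ∞`, which is where `f ∈ L²` enters.
-/

open MeasureTheory Set Filter Metric Module
open scoped ENNReal RealInnerProductSpace

section PolarCoordinates

variable {E : Type*} [NormedAddCommGroup E] [NormedSpace ℝ E] [FiniteDimensional ℝ E]
  [MeasurableSpace E] [BorelSpace E] [Nontrivial E] (μ : Measure E) [μ.IsAddHaarMeasure]

theorem lintegral_ofReal_eq_lintegral_toSphere_Ioi {h : E → ℝ} (hh : Measurable h) :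
    ∫⁻ x, ENNReal.ofReal (h x) ∂μ = ∫⁻ (ω : sphere (0 : E) 1), ∫⁻ r in Ioi (0 : ℝ),
      ENNReal.ofReal (r ^ (finrank ℝ E - 1) * h (r • (ω : E))) ∂volume ∂μ.toSphere := by
  have hpolar := μ.measurePreserving_homeomorphUnitSphereProd
  have hmeas : Measurable fun p : sphere (0 : E) 1 × Ioi (0 : ℝ) =>
      ENNReal.ofReal (h ((homeomorphUnitSphereProd E).symm p)) := by fun_prop
  calc ∫⁻ x, ENNReal.ofReal (h x) ∂μ = ∫⁻ x in ({0}ᶜ : Set E), ENNReal.ofReal (h x) ∂μ := by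
        rw [restrict_compl_singleton]
    _ = ∫⁻ p, ENNReal.ofReal (h ((homeomorphUnitSphereProd E).symm p))
          ∂(μ.toSphere.prod (Measure.volumeIoiPow (finrank ℝ E - 1))) := by
        rw [← lintegral_subtype_comap (measurableSet_singleton (0 : E)).compl,
          ← hpolar.lintegral_comp hmeas]
        simp
    _ = _ := by
        rw [lintegral_prod _ hmeas.aemeasurable]
        refine lintegral_congr fun ω => ?_
        rw [Measure.volumeIoiPow, lintegral_withDensity_eq_lintegral_mul _ (by fun_prop)
          (by fun_prop), ← lintegral_subtype_comap measurableSet_Ioi]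
        refine lintegral_congr fun r => ?_
        simp [ENNReal.ofReal_mul (pow_nonneg r.2.out.le _)]

end PolarCoordinates

theorem frequently_atTop_lt_of_setLIntegral_Ioi_ne_top {h : ℝ → ℝ} {a : ℝ}
    (hh : ∫⁻ r in Ioi a, ENNReal.ofReal (h r) ≠ ∞) {δ : ℝ} (hδ : 0 < δ) :
    ∃ᶠ r in atTop, h r < δ := by
  intro hev
  obtain ⟨M, hM⟩ := eventually_atTop.1 (hev.mono fun r hr => not_lt.1 hr)
  refine hh (eq_top_iff.2 ?_)
  calc ∞ = ∫⁻ _ in Ioi (max a M), ENNReal.ofReal δ := by simp [hδ]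
    _ ≤ ∫⁻ r in Ioi (max a M), ENNReal.ofReal (h r) :=
        setLIntegral_mono' measurableSet_Ioi fun r hr =>
          ENNReal.ofReal_le_ofReal (hM r (le_of_max_le_right hr.le))
    _ ≤ ∫⁻ r in Ioi a, ENNReal.ofReal (h r) :=
        lintegral_mono_set (Ioi_subset_Ioi (le_max_left a M))

theorem iUnion_Ioc_natCast_eq_Ioi_zero : ⋃ n : ℕ, Ioc (0 : ℝ) n = Ioi 0 :=
  iUnion_Ioc_eq_Ioi_self_iff.2 fun x _ => exists_nat_ge x

section

variable {F : Type*} [NormedAddCommGroup F] [InnerProductSpace ℝ F]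

theorem intervalIntegral_pow_mul_norm_sq_le_of_hasDerivAt (k : ℕ) {g g' : ℝ → F}
    (hg : ∀ r, HasDerivAt g (g' r) r) {R : ℝ} (hR : 0 ≤ R)
    (hg' : IntegrableOn (fun r => r ^ (k + 2) * ‖g' r‖ ^ 2) (Icc 0 R)) :
    ∫ r in 0..R, r ^ k * ‖g r‖ ^ 2 ≤
      2 / (k + 1) * (R ^ (k + 1) * ‖g R‖ ^ 2)
        + (2 / (k + 1)) ^ 2 * ∫ r in 0..R, r ^ (k + 2) * ‖g' r‖ ^ 2 := by
  set a : ℝ := k + 1 with ha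
  have ha0 : 0 < a := by positivity
  have hgc : Continuous g := continuous_iff_continuousAt.2 fun r => (hg r).continuousAt
  have hint : IntegrableOn (fun r => r ^ k * ‖g r‖ ^ 2) (Icc 0 R) :=
    (by fun_prop : Continuous fun r => r ^ k * ‖g r‖ ^ 2).integrableOn_Icc
  have hderiv : ∀ r, HasDerivAt (fun r => r ^ (k + 1) * ‖g r‖ ^ 2)
      (a * r ^ k * ‖g r‖ ^ 2 + r ^ (k + 1) * (2 * ⟪g r, g' r⟫)) r := fun r =>
    ((hasDerivAt_pow (k + 1) r).fun_mul (hg r).norm_sq).congr_deriv (by simp [ha])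
  have hlower : ∀ r ∈ Ioo 0 R,
      a / 2 * (r ^ k * ‖g r‖ ^ 2) - 2 / a * (r ^ (k + 2) * ‖g' r‖ ^ 2)
        ≤ a * r ^ k * ‖g r‖ ^ 2 + r ^ (k + 1) * (2 * ⟪g r, g' r⟫) := fun r hr => by
    have hinner := neg_le_of_abs_le (abs_real_inner_le_norm (g r) (g' r))
    have hrk : 0 ≤ r ^ (k + 1) := by have := hr.1.le; positivity
    have hsquare : a / 2 * (r ^ k * ‖g r‖ ^ 2) - 2 / a * (r ^ (k + 2) * ‖g' r‖ ^ 2)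
        = a * r ^ k * ‖g r‖ ^ 2 - 2 * r ^ (k + 1) * (‖g r‖ * ‖g' r‖)
          - r ^ k * (a * ‖g r‖ - 2 * r * ‖g' r‖) ^ 2 / (2 * a) := by
      field_simp; ring
    rw [hsquare]
    have : 0 ≤ r ^ k * (a * ‖g r‖ - 2 * r * ‖g' r‖) ^ 2 / (2 * a) := by
      have := hr.1.le; positivity
    nlinarith [mul_le_mul_of_nonneg_left hinner hrk]
  have hintI := (intervalIntegrable_iff_integrableOn_Icc_of_le hR).2 hint
  have hg'I := (intervalIntegrable_iff_integrableOn_Icc_of_le hR).2 hg'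
  have hFTC := intervalIntegral.integral_le_sub_of_hasDeriv_right_of_le
    (φ := fun r => a / 2 * (r ^ k * ‖g r‖ ^ 2) - 2 / a * (r ^ (k + 2) * ‖g' r‖ ^ 2)) hR
    (by fun_prop) (fun r _ => (hderiv r).hasDerivWithinAt)
    ((hint.const_mul _).sub' (hg'.const_mul _)) hlower
  rw [intervalIntegral.integral_sub (hintI.const_mul _) (hg'I.const_mul _),
    intervalIntegral.integral_const_mul, intervalIntegral.integral_const_mul] at hFTC
  have h0 : (0 : ℝ) ^ (k + 1) * ‖g 0‖ ^ 2 = 0 := by simp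
  rw [h0, sub_zero] at hFTC
  calc ∫ r in 0..R, r ^ k * ‖g r‖ ^ 2
      = 2 / a * (a / 2 * ∫ r in 0..R, r ^ k * ‖g r‖ ^ 2) := by field_simp
    _ ≤ 2 / a * (R ^ (k + 1) * ‖g R‖ ^ 2 + 2 / a * ∫ r in 0..R, r ^ (k + 2) * ‖g' r‖ ^ 2) := by
        gcongr; linarith
    _ = _ := by ring

theorem setLIntegral_Ioi_pow_mul_norm_sq_le_of_hasDerivAt [CompleteSpace F] (k : ℕ)
    {g g' : ℝ → F} (hg : ∀ r, HasDerivAt g (g' r) r)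
    (hfin : ∫⁻ r in Ioi 0, ENNReal.ofReal (r ^ (k + 2) * ‖g r‖ ^ 2) ≠ ∞) :
    ∫⁻ r in Ioi 0, ENNReal.ofReal (r ^ k * ‖g r‖ ^ 2) ≤
      ENNReal.ofReal ((2 / (k + 1)) ^ 2) *
        ∫⁻ r in Ioi 0, ENNReal.ofReal (r ^ (k + 2) * ‖g' r‖ ^ 2) := by
  obtain rfl : g' = deriv g := funext fun r => (hg r).deriv.symm
  set B := ∫⁻ r in Ioi 0, ENNReal.ofReal (r ^ (k + 2) * ‖deriv g r‖ ^ 2)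
  obtain hB | hB := eq_or_ne B ∞
  · rw [hB, ENNReal.mul_top (ENNReal.ofReal_pos.2 (by positivity)).ne']
    exact le_top
  have hgc : Continuous g := continuous_iff_continuousAt.2 fun r => (hg r).continuousAt
  rw [← iUnion_Ioc_natCast_eq_Ioi_zero, setLIntegral_iUnion_of_directed _
    (Monotone.directed_le fun m n hmn => Ioc_subset_Ioc_right (by exact_mod_cast hmn))]
  refine iSup_le fun n => ENNReal.le_of_forall_pos_le_add fun δ hδ _ => ?_
  obtain ⟨R, hRδ, hRn, hR1⟩ : ∃ R : ℝ, R ^ (k + 2) * ‖g R‖ ^ 2 < δ / 2 ∧ n ≤ R ∧ 1 ≤ R :=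
    ((frequently_atTop_lt_of_setLIntegral_Ioi_ne_top hfin (by positivity)).and_eventually
      ((eventually_ge_atTop _).and (eventually_ge_atTop _))).exists.imp fun R h => ⟨h.1, h.2⟩
  have hR : 0 ≤ R := zero_le_one.trans hR1
  have hint : IntegrableOn (fun r => r ^ (k + 2) * ‖deriv g r‖ ^ 2) (Ioc 0 R) := by
    refine ⟨(continuous_pow _).aestronglyMeasurable.mul
      ((stronglyMeasurable_deriv g).aestronglyMeasurable.norm.pow 2),
      (hasFiniteIntegral_iff_ofReal ?_).2 ?_⟩
    · exact ae_restrict_of_forall_mem measurableSet_Ioc fun r hr => by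
        have := hr.1.le; positivity
    · exact (lintegral_mono_set fun r hr => hr.1).trans_lt hB.lt_top
  have hboundary : 2 / (k + 1) * (R ^ (k + 1) * ‖g R‖ ^ 2) ≤ (δ : ℝ) := by
    have hpow : R ^ (k + 1) ≤ R ^ (k + 2) := pow_le_pow_right₀ hR1 (by omega)
    have hcoef : 2 / ((k : ℝ) + 1) ≤ 2 := div_le_self zero_le_two (by simp)
    calc 2 / (k + 1) * (R ^ (k + 1) * ‖g R‖ ^ 2) ≤ 2 * (R ^ (k + 2) * ‖g R‖ ^ 2) := by
          gcongr
      _ ≤ (δ : ℝ) := by linarith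
  calc ∫⁻ r in Ioc 0 (n : ℝ), ENNReal.ofReal (r ^ k * ‖g r‖ ^ 2)
      ≤ ∫⁻ r in Ioc 0 R, ENNReal.ofReal (r ^ k * ‖g r‖ ^ 2) :=
        lintegral_mono_set (Ioc_subset_Ioc_right hRn)
    _ = ENNReal.ofReal (∫ r in 0..R, r ^ k * ‖g r‖ ^ 2) := by
        rw [intervalIntegral.integral_of_le hR, ofReal_integral_eq_lintegral_ofReal
          (by fun_prop : Continuous fun r => r ^ k * ‖g r‖ ^ 2).integrableOn_Ioc
          (ae_restrict_of_forall_mem measurableSet_Ioc fun r hr => by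
            have := hr.1.le; positivity)]
    _ ≤ ENNReal.ofReal (2 / (k + 1) * (R ^ (k + 1) * ‖g R‖ ^ 2)
          + (2 / (k + 1)) ^ 2 * ∫ r in 0..R, r ^ (k + 2) * ‖deriv g r‖ ^ 2) :=
        ENNReal.ofReal_le_ofReal (intervalIntegral_pow_mul_norm_sq_le_of_hasDerivAt k hg hR
          (by rwa [integrableOn_Icc_iff_integrableOn_Ioc]))
    _ ≤ δ + ENNReal.ofReal ((2 / (k + 1)) ^ 2) * B := by
        refine ENNReal.ofReal_add_le.trans (add_le_add ?_ ?_)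
        · exact (ENNReal.ofReal_le_ofReal hboundary).trans_eq ENNReal.ofReal_coe_nnreal
        · rw [ENNReal.ofReal_mul (by positivity), intervalIntegral.integral_of_le hR,
            ofReal_integral_eq_lintegral_ofReal hint (ae_restrict_of_forall_mem measurableSet_Ioc
              fun r hr => by have := hr.1.le; positivity)]
          gcongr
          exact lintegral_mono_set fun r hr => hr.1
    _ = _ := add_comm _ _

theorem lintegral_inv_norm_sq_mul_norm_sq_le_lintegral_norm_fderiv_sq {E : Type*}
    [NormedAddCommGroup E] [NormedSpace ℝ E] [FiniteDimensional ℝ E] [MeasurableSpace E]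
    [BorelSpace E] (μ : Measure E) [μ.IsAddHaarMeasure] [CompleteSpace F] (hE : 3 ≤ finrank ℝ E)
    {f : E → F} (hf : Differentiable ℝ f) (hf2 : ∫⁻ x, ENNReal.ofReal (‖f x‖ ^ 2) ∂μ ≠ ∞) :
    ∫⁻ x, ENNReal.ofReal ((‖x‖ ^ 2)⁻¹ * ‖f x‖ ^ 2) ∂μ ≤
      ENNReal.ofReal ((2 / (finrank ℝ E - 2 : ℝ)) ^ 2) *
        ∫⁻ x, ENNReal.ofReal (‖fderiv ℝ f x‖ ^ 2) ∂μ := by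
  obtain ⟨k, hk⟩ : ∃ k, finrank ℝ E = k + 3 := ⟨finrank ℝ E - 3, by omega⟩
  have : Nontrivial E := Module.nontrivial_of_finrank_pos (by omega : 0 < finrank ℝ E)
  have hC : (2 / (finrank ℝ E - 2 : ℝ)) ^ 2 = (2 / (k + 1)) ^ 2 := by
    rw [hk]; push_cast; ring_nf
  have hdim : finrank ℝ E - 1 = k + 2 := by omega
  have hf2m : Measurable fun x => ‖f x‖ ^ 2 := (hf.continuous.norm.pow 2).measurable
  rw [lintegral_ofReal_eq_lintegral_toSphere_Ioi μ hf2m, hdim] at hf2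
  rw [lintegral_ofReal_eq_lintegral_toSphere_Ioi μ (h := fun x => (‖x‖ ^ 2)⁻¹ * ‖f x‖ ^ 2)
      ((continuous_norm.pow 2).measurable.inv.mul hf2m),
    lintegral_ofReal_eq_lintegral_toSphere_Ioi μ
      ((measurable_fderiv ℝ f).norm.pow_const 2), hdim, hC]
  have hradial : ∀ ω : sphere (0 : E) 1, ∀ r : ℝ,
      HasDerivAt (fun r : ℝ => f (r • (ω : E))) (fderiv ℝ f (r • (ω : E)) ω) r := fun ω r => by
    simpa [Function.comp_def] using
      (hf _).hasFDerivAt.comp_hasDerivAt r ((hasDerivAt_id r).smul_const (ω : E))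
  have hcont : Continuous fun p : sphere (0 : E) 1 × ℝ =>
      p.2 ^ (k + 2) * ‖f (p.2 • (p.1 : E))‖ ^ 2 := by
    have := hf.continuous; fun_prop
  have hfin : ∀ᵐ (ω : sphere (0 : E) 1) ∂μ.toSphere,
      ∫⁻ r in Ioi 0, ENNReal.ofReal (r ^ (k + 2) * ‖f (r • (ω : E))‖ ^ 2) ≠ ∞ :=
    (ae_lt_top hcont.measurable.ennreal_ofReal.lintegral_prod_right' hf2).mono fun ω hω => hω.ne
  rw [← lintegral_const_mul' _ _ ENNReal.ofReal_ne_top]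
  refine lintegral_mono_ae (hfin.mono fun ω hω => ?_)
  calc ∫⁻ r in Ioi 0,
        ENNReal.ofReal (r ^ (k + 2) * ((‖r • (ω : E)‖ ^ 2)⁻¹ * ‖f (r • (ω : E))‖ ^ 2))
      = ∫⁻ r in Ioi 0, ENNReal.ofReal (r ^ k * ‖f (r • (ω : E))‖ ^ 2) := by
        refine setLIntegral_congr_fun measurableSet_Ioi fun r hr => ?_
        rw [norm_smul, norm_eq_of_mem_sphere ω, Real.norm_of_nonneg hr.out.le]
        have := hr.out.ne'
        congr 1
        field_simp
        ring
    _ ≤ ENNReal.ofReal ((2 / (k + 1)) ^ 2) *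
          ∫⁻ r in Ioi 0, ENNReal.ofReal (r ^ (k + 2) * ‖fderiv ℝ f (r • (ω : E)) ω‖ ^ 2) :=
        setLIntegral_Ioi_pow_mul_norm_sq_le_of_hasDerivAt k (hradial ω) hω
    _ ≤ _ := by
        refine mul_le_mul_right (setLIntegral_mono' measurableSet_Ioi fun r hr => ?_) _
        have := hr.out.le
        gcongr
        simpa using (fderiv ℝ f (r • (ω : E))).le_opNorm ω

end

theorem MeasureTheory.MemLp.lintegral_ofReal_norm_sq_ne_top {α G : Type*} [MeasurableSpace α]
    {μ : Measure α} [NormedAddCommGroup G] {f : α → G} (hf : MemLp f 2 μ) :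
    ∫⁻ x, ENNReal.ofReal (‖f x‖ ^ 2) ∂μ ≠ ∞ :=
  (hf.integrable_norm_pow two_ne_zero).lintegral_lt_top.ne

/-- **Hardy's inequality**: there exists `c > 0` such that for every function `f`
in the Sobolev space `W^{1,2}(ℝ³)` (formalized as: `f` is differentiable, `f ∈ L²`
and its gradient `fderiv ℝ f ∈ L²`), one has
`∫ ‖t‖⁻² ‖f t‖² ≤ c * ∫ ‖∇ f t‖²`. -/
theorem hardy_inequality :
    ∃ c : ℝ, 0 < c ∧
      ∀ f : EuclideanSpace ℝ (Fin 3) → ℂ,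
        Differentiable ℝ f →
        MemLp f 2 (volume : Measure (EuclideanSpace ℝ (Fin 3))) →
        MemLp (fun t => fderiv ℝ f t) 2 (volume : Measure (EuclideanSpace ℝ (Fin 3))) →
        ∫ t : EuclideanSpace ℝ (Fin 3), (‖t‖ ^ 2)⁻¹ * ‖f t‖ ^ 2
          ≤ c * ∫ t : EuclideanSpace ℝ (Fin 3), ‖fderiv ℝ f t‖ ^ 2 := by
  refine ⟨4, by norm_num, fun f hf hf2 hdf2 => ?_⟩
  have hardy := lintegral_inv_norm_sq_mul_norm_sq_le_lintegral_norm_fderiv_sq volume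
    (by simp) hf hf2.lintegral_ofReal_norm_sq_ne_top
  have hfc := hf.continuous
  rw [integral_eq_lintegral_of_nonneg_ae (Eventually.of_forall fun x => by positivity)
      (by fun_prop), integral_eq_lintegral_of_nonneg_ae
      (Eventually.of_forall fun x => by positivity) (by fun_prop)]
  refine (ENNReal.toReal_mono (ENNReal.mul_ne_top ENNReal.ofReal_ne_top
    hdf2.lintegral_ofReal_norm_sq_ne_top) hardy).trans_eq ?_
  rw [ENNReal.toReal_mul, ENNReal.toReal_ofReal (by positivity)]
  norm_num
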